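/- Main theorem (iii): Let T : C → C be nonexpansive and S : C → C nonspreading with F = Fix(T) ∩ Fix(S) ≠ ∅, δ ∈ (0,1), A_T = (1−δ)I+δT, A_S = (1−δ)I+δS. Let (αₙ) ⊆ (0,1) with αₙ → 0 and Σαₙ = ∞, and (βₙ) ⊆ [0,1] with liminf βₙ(1−βₙ) > 0. Then the sequence x₁ ∈ C, x_{n+1} = αₙu + (1−αₙ)[βₙA_Txₙ + (1−βₙ)A_Sxₙ] converges strongly to P_F u. -/

import Mathlib

/-!
The set `F` of common fixed points is closed and convex, because nonexpansive and nonspreading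
maps are quasi-nonexpansive; so `p = P_F u` exists and is characterised by `⟪u - p, z - p⟫ ≤ 0`
on `F`. For `y_n = β_n A_T x_n + (1 - β_n) A_S x_n` the averaging gives
`‖y_n - p‖² ≤ ‖x_n - p‖² - δ(1 - δ)(β_n ‖x_n - T x_n‖² + (1 - β_n) ‖x_n - S x_n‖²)`,
so `a_n = ‖x_n - p‖²` satisfies both `a_{n+1} ≤ (1 - α_n) a_n + 2 α_n ⟪u - p, x_{n+1} - p⟫` and
`a_{n+1} ≤ a_n - η_n + α_n ‖u - p‖²`, where `η_n` controls the residuals `‖x_n - T x_n‖` and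
`‖x_n - S x_n‖` (this is where `liminf β_n (1 - β_n) > 0` enters). Along any subsequence with
`η → 0`, weak cluster points lie in `F` by demiclosedness of `I - T` and `I - S` (for `S` through
`‖S x - S y‖² ≤ ‖x - y‖² + 2 ⟪x - S x, y - S y⟫`), so there `limsup ⟪u - p, x_n - p⟫ ≤ 0`.
Xu's lemma, combined with Maingé's subsequence argument when `a` is not eventually monotone,
then gives `a_n → 0`.
-/

open Filter Topology Function Finset RealInnerProductSpace

section RealSequences

theorem tendsto_zero_of_le_one_sub_mul_add_mul {a γ b : ℕ → ℝ} (ha : ∀ n, 0 ≤ a n)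
    (hγ : ∀ n, γ n ∈ Set.Icc (0 : ℝ) 1)
    (hγsum : Tendsto (fun N => ∑ n ∈ range N, γ n) atTop atTop)
    (hrec : ∀ᶠ n in atTop, a (n + 1) ≤ (1 - γ n) * a n + γ n * b n)
    (hb : ∀ ε > 0, ∀ᶠ n in atTop, b n ≤ ε) :
    Tendsto a atTop (𝓝 0) := by
  refine tendsto_order.2 ⟨fun c hc => Eventually.of_forall fun n => hc.trans_le (ha n),
    fun ε hε => ?_⟩
  obtain ⟨N, hN⟩ := eventually_atTop.1 (hrec.and (hb (ε / 2) (half_pos hε)))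
  -- the excess of `a` over `ε / 2` decays at least like `exp (-∑ γ)`
  set D : ℕ → ℝ := fun n => max (a n - ε / 2) 0
  set Γ : ℕ → ℝ := fun n => ∑ i ∈ range n, γ i - ∑ i ∈ range N, γ i
  have hD : ∀ n ≥ N, D n ≤ Real.exp (-Γ n) * D N := by
    intro n hn
    induction n, hn using Nat.le_induction with
    | base => simp [Γ]
    | succ n hn ih =>
      obtain ⟨hrecn, hbn⟩ := hN n hn
      have hγn := hγ n
      have h1γ : 0 ≤ 1 - γ n := sub_nonneg.2 hγn.2
      have h₁ : D (n + 1) ≤ (1 - γ n) * D n := by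
        refine max_le ?_ (mul_nonneg h1γ (le_max_right _ _))
        nlinarith [mul_le_mul_of_nonneg_left (le_max_left (a n - ε / 2) 0) h1γ,
          mul_le_mul_of_nonneg_left hbn hγn.1]
      have h₂ : 1 - γ n ≤ Real.exp (-γ n) := by linarith [Real.add_one_le_exp (-γ n)]
      have hΓ : Real.exp (-Γ (n + 1)) = Real.exp (-γ n) * Real.exp (-Γ n) := by
        rw [← Real.exp_add]; simp only [Γ, sum_range_succ]; ring_nf
      calc D (n + 1) ≤ (1 - γ n) * D n := h₁
        _ ≤ Real.exp (-γ n) * (Real.exp (-Γ n) * D N) :=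
          mul_le_mul h₂ ih (le_max_right _ _) (Real.exp_pos _).le
        _ = Real.exp (-Γ (n + 1)) * D N := by rw [hΓ, mul_assoc]
  have hΓ : Tendsto Γ atTop atTop :=
    tendsto_atTop_add_const_right _ (-∑ i ∈ range N, γ i) hγsum
  have hlim : Tendsto (fun n => Real.exp (-Γ n) * D N) atTop (𝓝 0) := by
    simpa using (Real.tendsto_exp_atBot.comp (tendsto_neg_atTop_atBot.comp hΓ)).mul_const (D N)
  filter_upwards [hlim.eventually (gt_mem_nhds (half_pos hε)), eventually_ge_atTop N]
    with n hn hnN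
  linarith [hD n hnN, le_max_left (a n - ε / 2) 0]

/-- Maingé's lemma; `τ n` is the last `k ≤ n` with `a k < a (k + 1)`. -/
theorem exists_tendsto_atTop_lt_succ_and_le_succ {a : ℕ → ℝ}
    (h : ∀ N, ∃ n ≥ N, a n < a (n + 1)) :
    ∃ τ : ℕ → ℕ, Tendsto τ atTop atTop ∧
      ∀ᶠ n in atTop, a (τ n) < a (τ n + 1) ∧ a n ≤ a (τ n + 1) := by
  classical
  set P : ℕ → Prop := fun k => a k < a (k + 1)
  obtain ⟨n₁, -, hn₁⟩ := h 0
  refine ⟨fun n => Nat.findGreatest P n, ?_, ?_⟩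
  · refine tendsto_atTop_atTop.2 fun m => ?_
    obtain ⟨k, hkm, hk⟩ := h m
    exact ⟨k, fun n hn => hkm.trans (Nat.le_findGreatest hn hk)⟩
  · filter_upwards [eventually_ge_atTop n₁] with n hn
    have hτ : P (Nat.findGreatest P n) := Nat.findGreatest_spec hn hn₁
    refine ⟨hτ, ?_⟩
    have hchain : ∀ m, Nat.findGreatest P n ≤ m → m ≤ n →
        a m ≤ a (Nat.findGreatest P n + 1) := by
      intro m hm
      induction m, hm using Nat.le_induction with
      | base => exact fun _ => hτ.le
      | succ m hm ih =>
        intro hmn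
        rcases hm.lt_or_eq with hlt | rfl
        · have hm : ¬P m := Nat.findGreatest_is_greatest hlt (by omega)
          exact (not_lt.1 hm).trans (ih (by omega))
        · exact le_rfl
    exact hchain n (Nat.findGreatest_le n) le_rfl

theorem tendsto_zero_of_le_one_sub_mul_add_mul_of_le_sub_add {a γ b η ρ : ℕ → ℝ}
    (ha : ∀ n, 0 ≤ a n) (hη : ∀ n, 0 ≤ η n) (hγ : ∀ n, γ n ∈ Set.Ioo (0 : ℝ) 1)
    (hγsum : Tendsto (fun N => ∑ n ∈ range N, γ n) atTop atTop) (hρ : Tendsto ρ atTop (𝓝 0))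
    (h₁ : ∀ᶠ n in atTop, a (n + 1) ≤ (1 - γ n) * a n + γ n * b n)
    (h₂ : ∀ᶠ n in atTop, a (n + 1) ≤ a n - η n + ρ n)
    (hb : ∀ σ : ℕ → ℕ, Tendsto σ atTop atTop → Tendsto (η ∘ σ) atTop (𝓝 0) →
      ∀ ε > 0, ∀ᶠ n in atTop, b (σ n) ≤ ε) :
    Tendsto a atTop (𝓝 0) := by
  by_cases hmono : ∃ N, ∀ n ≥ N, a (n + 1) ≤ a n
  · obtain ⟨N, hN⟩ := hmono
    have hanti : Antitone fun k => a (k + N) :=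
      antitone_nat_of_succ_le fun k => by simpa [add_right_comm] using hN (k + N) (by omega)
    obtain ⟨L, hL⟩ : ∃ L, Tendsto a atTop (𝓝 L) :=
      ⟨_, (tendsto_add_atTop_iff_nat N).1 (tendsto_atTop_ciInf hanti ⟨0, by
        rintro _ ⟨k, rfl⟩; exact ha _⟩)⟩
    have hηlim : Tendsto η atTop (𝓝 0) := by
      refine tendsto_of_tendsto_of_tendsto_of_le_of_le' tendsto_const_nhds
        (by simpa using (hL.sub (hL.comp (tendsto_add_atTop_nat 1))).add hρ)
        (Eventually.of_forall hη) (h₂.mono fun n hn => ?_)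
      linarith
    exact tendsto_zero_of_le_one_sub_mul_add_mul ha
      (fun n => Set.Ioo_subset_Icc_self (hγ n))
      hγsum h₁ (hb id tendsto_id hηlim)
  · push Not at hmono
    obtain ⟨τ, hτ, hτa⟩ := exists_tendsto_atTop_lt_succ_and_le_succ hmono
    have hητ : Tendsto (η ∘ τ) atTop (𝓝 0) := by
      refine tendsto_of_tendsto_of_tendsto_of_le_of_le' tendsto_const_nhds (hρ.comp hτ)
        (Eventually.of_forall fun n => hη _) ?_
      filter_upwards [hτa, hτ.eventually h₂] with n hn h₂n
      simp only [Function.comp_apply]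
      linarith [hn.1]
    refine tendsto_order.2 ⟨fun c hc => Eventually.of_forall fun n => hc.trans_le (ha n),
      fun ε hε => ?_⟩
    filter_upwards [hτa, hτ.eventually h₁, hb τ hτ hητ (ε / 2) (half_pos hε)]
      with n hn h₁n hbn
    -- at `τ n` the recursion forces `a (τ n + 1) ≤ b (τ n)`
    have hγτ := hγ (τ n)
    have : a (τ n + 1) ≤ b (τ n) := le_of_mul_le_mul_left (by
      nlinarith [mul_le_mul_of_nonneg_left hn.1.le (sub_nonneg.2 hγτ.2.le)])
      hγτ.1
    linarith [hn.2]

theorem tendsto_zero_of_tendsto_const_mul_sq {ι : Type*} {l : Filter ι} {f : ι → ℝ} {c : ℝ}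
    (hc : c ≠ 0) (h : Tendsto (fun n => c * f n ^ 2) l (𝓝 0)) : Tendsto f l (𝓝 0) := by
  have hsq : Tendsto (fun n => f n ^ 2) l (𝓝 0) := by
    simpa [hc] using h.const_mul c⁻¹
  rw [tendsto_zero_iff_norm_tendsto_zero]
  simpa [Real.sqrt_sq_eq_abs] using hsq.sqrt

end RealSequences

section Normed

variable {H : Type*} [NormedAddCommGroup H]

def QuasiNonexpansiveOn (R : H → H) (C : Set H) : Prop :=
  ∀ x ∈ C, ∀ z ∈ C, R z = z → ‖R x - z‖ ≤ ‖x - z‖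

theorem quasiNonexpansiveOn_of_nonexpansive {T : H → H} {C : Set H}
    (hT : ∀ x ∈ C, ∀ y ∈ C, ‖T x - T y‖ ≤ ‖x - y‖) : QuasiNonexpansiveOn T C :=
  fun x hx z hz hTz => by simpa only [hTz] using hT x hx z hz

theorem QuasiNonexpansiveOn.isClosed_inter_fixedPoints {R : H → H} {C : Set H}
    (hR : QuasiNonexpansiveOn R C) (hC : IsClosed C) :
    IsClosed (C ∩ fixedPoints R) := by
  refine isClosed_of_closure_subset fun q hq => ?_
  have hqC : q ∈ C := hC.closure_subset (closure_mono Set.inter_subset_left hq)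
  refine ⟨hqC, eq_of_forall_dist_le fun ε hε => ?_⟩
  obtain ⟨z, ⟨hzC, hRz⟩, hqz⟩ := Metric.mem_closure_iff.1 hq (ε / 2) (half_pos hε)
  rw [dist_eq_norm] at hqz ⊢
  calc ‖R q - q‖ ≤ ‖R q - z‖ + ‖z - q‖ := norm_sub_le_norm_sub_add_norm_sub _ _ _
    _ ≤ ‖q - z‖ + ‖q - z‖ := add_le_add (hR q hqC z hzC hRz) (norm_sub_rev z q).le
    _ ≤ ε := by linarith

end Normed

section Hilbert

variable {H : Type*} [NormedAddCommGroup H] [InnerProductSpace ℝ H]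

theorem norm_smul_add_one_sub_smul_sq (t : ℝ) (a b : H) :
    ‖t • a + (1 - t) • b‖ ^ 2
      = t * ‖a‖ ^ 2 + (1 - t) * ‖b‖ ^ 2 - t * (1 - t) * ‖a - b‖ ^ 2 := by
  simp only [norm_add_sq_real, norm_sub_sq_real, real_inner_smul_left, real_inner_smul_right,
    norm_smul, mul_pow, Real.norm_eq_abs, sq_abs]
  ring

theorem norm_smul_add_one_sub_smul_sub_sq_le {t : ℝ} (ht : t ∈ Set.Icc (0 : ℝ) 1)
    (a b z : H) :
    ‖t • a + (1 - t) • b - z‖ ^ 2 ≤ t * ‖a - z‖ ^ 2 + (1 - t) * ‖b - z‖ ^ 2 := by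
  rw [show t • a + (1 - t) • b - z = t • (a - z) + (1 - t) • (b - z) by module,
    norm_smul_add_one_sub_smul_sq]
  have := mul_nonneg (mul_nonneg ht.1 (sub_nonneg.2 ht.2)) (sq_nonneg ‖a - z - (b - z)‖)
  linarith

theorem norm_add_sq_le_norm_sq_add_two_inner (a b : H) :
    ‖a + b‖ ^ 2 ≤ ‖b‖ ^ 2 + 2 * ⟪a, a + b⟫ := by
  rw [norm_add_sq_real, inner_add_right, real_inner_self_eq_norm_sq]
  nlinarith [sq_nonneg ‖a‖]

theorem norm_apply_sub_apply_sq_le_of_nonspreading {S : H → H} {x y : H}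
    (h : 2 * ‖S x - S y‖ ^ 2 ≤ ‖S x - y‖ ^ 2 + ‖x - S y‖ ^ 2) :
    ‖S x - S y‖ ^ 2 ≤ ‖x - y‖ ^ 2 + 2 * ⟪x - S x, y - S y⟫ := by
  have e₁ : S x - y = (S x - S y) - (y - S y) := by abel
  have e₂ : x - S y = (x - S x) + (S x - S y) := by abel
  have e₃ : x - y = ((x - S x) - (y - S y)) + (S x - S y) := by abel
  rw [e₁, e₂] at h
  rw [e₃]
  simp only [norm_add_sq_real, norm_sub_sq_real, inner_sub_left, inner_sub_right,
    real_inner_comm (y - S y) (S x - S y)] at h ⊢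
  linarith

theorem quasiNonexpansiveOn_of_nonspreading {S : H → H} {C : Set H}
    (hS : ∀ x ∈ C, ∀ y ∈ C, 2 * ‖S x - S y‖ ^ 2 ≤ ‖S x - y‖ ^ 2 + ‖x - S y‖ ^ 2) :
    QuasiNonexpansiveOn S C := by
  intro x hx z hz hSz
  have h := norm_apply_sub_apply_sq_le_of_nonspreading (hS x hx z hz)
  rw [hSz, sub_self, inner_zero_right] at h
  exact pow_le_pow_iff_left₀ (norm_nonneg _) (norm_nonneg _) two_ne_zero |>.1 (by linarith)

namespace QuasiNonexpansiveOn

variable {R : H → H} {C : Set H}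

theorem convex_inter_fixedPoints (hR : QuasiNonexpansiveOn R C) (hC : Convex ℝ C) :
    Convex ℝ (C ∩ fixedPoints R) := by
  rintro z₁ ⟨hz₁C, hz₁⟩ z₂ ⟨hz₂C, hz₂⟩ s t hs ht hst
  obtain rfl : t = 1 - s := by linarith
  set w := s • z₁ + (1 - s) • z₂
  have hwC : w ∈ C := hC hz₁C hz₂C hs ht hst
  refine ⟨hwC, ?_⟩
  -- `R w` is within `(1 - s) d` of `z₁` and within `s d` of `z₂`, where `d = ‖z₁ - z₂‖`,
  -- which forces `R w = w`.
  have h₁ : ‖R w - z₁‖ ≤ (1 - s) * ‖z₁ - z₂‖ := by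
    refine (hR w hwC z₁ hz₁C hz₁).trans_eq ?_
    rw [show w - z₁ = (1 - s) • (z₂ - z₁) by module, norm_smul, Real.norm_of_nonneg ht,
      norm_sub_rev]
  have h₂ : ‖R w - z₂‖ ≤ s * ‖z₁ - z₂‖ := by
    refine (hR w hwC z₂ hz₂C hz₂).trans_eq ?_
    rw [show w - z₂ = s • (z₁ - z₂) by module, norm_smul, Real.norm_of_nonneg hs]
  have hsq := norm_smul_add_one_sub_smul_sq s (R w - z₁) (R w - z₂)
  rw [show s • (R w - z₁) + (1 - s) • (R w - z₂) = R w - w by module,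
    show R w - z₁ - (R w - z₂) = -(z₁ - z₂) by abel, norm_neg] at hsq
  have : ‖R w - w‖ ^ 2 ≤ 0 := by
    rw [hsq]
    nlinarith [mul_le_mul_of_nonneg_left (pow_le_pow_left₀ (norm_nonneg _) h₁ 2) hs,
      mul_le_mul_of_nonneg_left (pow_le_pow_left₀ (norm_nonneg _) h₂ 2) ht]
  exact sub_eq_zero.1 (norm_eq_zero.1 (pow_eq_zero_iff two_ne_zero |>.1
    (le_antisymm this (sq_nonneg _))))

end QuasiNonexpansiveOn

theorem exists_nearest_point [CompleteSpace H] {K : Set H} (hne : K.Nonempty) (hc : IsClosed K)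
    (hv : Convex ℝ K) (u : H) :
    ∃ p ∈ K, (∀ z ∈ K, ⟪u - p, z - p⟫ ≤ 0) ∧ ∀ z ∈ K, ‖u - p‖ ≤ ‖u - z‖ := by
  obtain ⟨p, hpK, hmin⟩ := exists_norm_eq_iInf_of_complete_convex hne hc.isComplete hv u
  refine ⟨p, hpK, (norm_eq_iInf_iff_real_inner_le_zero hv hpK).1 hmin, fun z hz => ?_⟩
  rw [hmin]
  exact ciInf_le ⟨0, Set.forall_mem_range.2 fun _ => norm_nonneg _⟩ (⟨z, hz⟩ : K)

theorem norm_averaged_sub_sq_le {δ : ℝ} (hδ : δ ∈ Set.Icc (0 : ℝ) 1) {x r z : H}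
    (h : ‖r - z‖ ≤ ‖x - z‖) :
    ‖((1 - δ) • x + δ • r) - z‖ ^ 2 ≤ ‖x - z‖ ^ 2 - δ * (1 - δ) * ‖x - r‖ ^ 2 := by
  have e : (1 - δ) • x + δ • r - z = (1 - δ) • (x - z) + (1 - (1 - δ)) • (r - z) := by module
  rw [e, norm_smul_add_one_sub_smul_sq, sub_sub_sub_cancel_right]
  nlinarith [mul_le_mul_of_nonneg_left (pow_le_pow_left₀ (norm_nonneg _) h 2) hδ.1]

def WeakTendsto {ι : Type*} (v : ι → H) (l : Filter ι) (w : H) : Prop :=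
  ∀ y, Tendsto (fun n => ⟪y, v n⟫) l (𝓝 ⟪y, w⟫)

namespace WeakTendsto

variable {ι : Type*} {l : Filter ι} {v : ι → H} {w : H}

theorem inner_sub (hw : WeakTendsto v l w) (y z : H) :
    Tendsto (fun n => ⟪y, v n - z⟫) l (𝓝 ⟪y, w - z⟫) := by
  simpa only [inner_sub_right] using (hw y).sub_const ⟪y, z⟫

theorem mem_of_isClosed_of_convex [CompleteSpace H] [l.NeBot] (hw : WeakTendsto v l w)
    {C : Set H} (hCc : IsClosed C) (hCv : Convex ℝ C) (hv : ∀ᶠ n in l, v n ∈ C) : w ∈ C := by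
  obtain ⟨n, hn⟩ := hv.exists
  obtain ⟨q, hqC, hq, -⟩ := exists_nearest_point ⟨v n, hn⟩ hCc hCv w
  have : ⟪w - q, w - q⟫ ≤ 0 := le_of_tendsto (hw.inner_sub _ q) (hv.mono fun n => hq (v n))
  rwa [sub_eq_zero.1 (real_inner_self_nonpos.1 this)]

/-- Opial's property: a weak limit is the unique asymptotically nearest point. -/
theorem eq_of_norm_sub_sq_le [l.NeBot] (hw : WeakTendsto v l w) {z : H} {g : ι → ℝ}
    (hg : Tendsto g l (𝓝 0)) (h : ∀ᶠ n in l, ‖v n - z‖ ^ 2 ≤ ‖v n - w‖ ^ 2 + g n) : z = w := by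
  have hlim : Tendsto (fun n => g n - 2 * ⟪w - z, v n - w⟫) l (𝓝 0) := by
    simpa using hg.sub ((hw.inner_sub (w - z) w).const_mul 2)
  have : ‖w - z‖ ^ 2 ≤ 0 := by
    refine ge_of_tendsto hlim (h.mono fun n hn => ?_)
    have e : v n - z = (v n - w) + (w - z) := by abel
    rw [e, norm_add_sq_real, real_inner_comm] at hn
    linarith
  exact (sub_eq_zero.1 (norm_eq_zero.1 (pow_eq_zero_iff two_ne_zero |>.1
    (le_antisymm this (sq_nonneg _))))).symm

/-- Demiclosedness principle for `I - R`. -/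
theorem apply_eq_of_tendsto_norm_sub_apply [l.NeBot] (hw : WeakTendsto v l w) {R : H → H}
    {M : ℝ} (hM : ∀ᶠ n in l, ‖v n - w‖ ≤ M)
    (hres : Tendsto (fun n => ‖v n - R (v n)‖) l (𝓝 0)) {h : ι → ℝ} (hh : Tendsto h l (𝓝 0))
    (hR : ∀ᶠ n in l, ‖R (v n) - R w‖ ^ 2 ≤ ‖v n - w‖ ^ 2 + h n) : R w = w := by
  set c := ‖w - R w‖
  refine hw.eq_of_norm_sub_sq_le
    (g := fun n => ‖v n - R (v n)‖ ^ 2 + 2 * ‖v n - R (v n)‖ * (‖v n - R (v n)‖ + M + c)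
      + h n)
    (by simpa using ((hres.pow 2).add ((hres.const_mul 2).mul
      ((hres.add_const M).add_const c))).add hh) ?_
  filter_upwards [hM, hR] with n hMn hRn
  set e := ‖v n - R (v n)‖
  have h₁ : ‖v n - R w‖ ≤ e + ‖R (v n) - R w‖ := norm_sub_le_norm_sub_add_norm_sub _ _ _
  have h₂ : ‖R (v n) - R w‖ ≤ e + M + c := by
    calc ‖R (v n) - R w‖ = ‖(R (v n) - v n) + (v n - w) + (w - R w)‖ := by congr 1; abel
      _ ≤ ‖R (v n) - v n‖ + ‖v n - w‖ + ‖w - R w‖ := norm_add₃_le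
      _ ≤ e + M + c := by rw [norm_sub_rev]; linarith
  nlinarith [pow_le_pow_left₀ (norm_nonneg _) h₁ 2,
    mul_le_mul_of_nonneg_left h₂ (norm_nonneg (v n - R (v n)))]

end WeakTendsto

theorem Ultrafilter.exists_weakTendsto [CompleteSpace H] {ι : Type*} (U : Ultrafilter ι)
    {v : ι → H} {M : ℝ} (hv : ∀ᶠ n in U, ‖v n‖ ≤ M) : ∃ w, WeakTendsto v U w := by
  have hbdd : ∀ y, ∀ᶠ n in U, |⟪y, v n⟫| ≤ ‖y‖ * M := fun y =>
    hv.mono fun n hn => (abs_real_inner_le_norm y (v n)).trans (by gcongr)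
  have hlim : ∀ y : H, ∃ L, Tendsto (fun n => ⟪y, v n⟫) U (𝓝 L) := fun y => by
    obtain ⟨L, -, hL⟩ := (isCompact_Icc (a := -(‖y‖ * M)) (b := ‖y‖ * M)).ultrafilter_le_nhds
      (U.map fun n => ⟪y, v n⟫) (le_principal_iff.2 ((hbdd y).mono fun n hn => abs_le.1 hn))
    exact ⟨L, hL⟩
  choose f hf using hlim
  let φ : H →L[ℝ] ℝ := LinearMap.mkContinuous
    { toFun := f
      map_add' := fun y z => tendsto_nhds_unique (hf (y + z))
        (by simpa only [inner_add_left] using (hf y).add (hf z))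
      map_smul' := fun c y => tendsto_nhds_unique (hf (c • y))
        (by simpa only [real_inner_smul_left, smul_eq_mul, RingHom.id_apply]
          using (hf y).const_mul c) } M
    fun y => by
      rw [Real.norm_eq_abs, mul_comm]
      exact le_of_tendsto (hf y).abs (hbdd y)
  obtain ⟨w, hw⟩ := (InnerProductSpace.toDual ℝ H).surjective φ
  refine ⟨w, fun y => ?_⟩
  convert hf y using 2
  rw [real_inner_comm, ← InnerProductSpace.toDual_apply_apply, hw]
  rfl

theorem eventually_inner_sub_le_of_tendsto_norm_sub_apply [CompleteSpace H] {C : Set H}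
    (hCc : IsClosed C) (hCv : Convex ℝ C) {T S : H → H}
    (hne : ∀ x ∈ C, ∀ y ∈ C, ‖T x - T y‖ ≤ ‖x - y‖)
    (hns : ∀ x ∈ C, ∀ y ∈ C, 2 * ‖S x - S y‖ ^ 2 ≤ ‖S x - y‖ ^ 2 + ‖x - S y‖ ^ 2)
    {a p : H} (hap : ∀ z ∈ C, T z = z → S z = z → ⟪a, z - p⟫ ≤ 0)
    {v : ℕ → H} {M : ℝ} (hv : ∀ᶠ n in atTop, v n ∈ C ∧ ‖v n - p‖ ≤ M)
    (hvT : Tendsto (fun n => ‖v n - T (v n)‖) atTop (𝓝 0))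
    (hvS : Tendsto (fun n => ‖v n - S (v n)‖) atTop (𝓝 0)) :
    ∀ ε > 0, ∀ᶠ n in atTop, ⟪a, v n - p⟫ ≤ ε := by
  intro ε hε
  by_contra hfreq
  -- pass to an ultrafilter along which `⟪a, v n - p⟫ > ε` and `v` converges weakly
  have := frequently_iff_neBot.1 (not_eventually.1 hfreq)
  obtain ⟨U, hU⟩ := exists_ultrafilter_le (atTop ⊓ 𝓟 {n | ¬⟪a, v n - p⟫ ≤ ε})
  have hUtop : (U : Filter ℕ) ≤ atTop := hU.trans inf_le_left
  have hUv : ∀ᶠ n in U, v n ∈ C ∧ ‖v n - p‖ ≤ M := hUtop hv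
  obtain ⟨w, hw⟩ := U.exists_weakTendsto (M := ‖p‖ + M)
    (hUv.mono fun n h => (norm_le_insert' (v n) p).trans (by linarith [h.2]))
  have hwC : w ∈ C := hw.mem_of_isClosed_of_convex hCc hCv (hUv.mono fun _ h => h.1)
  have hvw : ∀ᶠ n in U, ‖v n - w‖ ≤ M + ‖p - w‖ :=
    hUv.mono fun n h => (norm_sub_le_norm_sub_add_norm_sub _ _ _).trans (by linarith [h.2])
  have hTw : T w = w := hw.apply_eq_of_tendsto_norm_sub_apply hvw (hvT.mono_left hUtop)
    tendsto_const_nhds (hUv.mono fun n h => by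
      simpa using pow_le_pow_left₀ (norm_nonneg _) (hne _ h.1 _ hwC) 2)
  have hSw : S w = w := hw.apply_eq_of_tendsto_norm_sub_apply hvw (hvS.mono_left hUtop)
    (by simpa using ((tendsto_zero_iff_norm_tendsto_zero.2 (hvS.mono_left hUtop)).inner
      (𝕜 := ℝ) (tendsto_const_nhds (x := w - S w))).const_mul (2 : ℝ))
    (hUv.mono fun n h => norm_apply_sub_apply_sq_le_of_nonspreading (hns _ h.1 _ hwC))
  have hUε : ∀ᶠ n in U, ¬⟪a, v n - p⟫ ≤ ε := le_principal_iff.1 (hU.trans inf_le_right)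
  have hεw : ε ≤ ⟪a, w - p⟫ :=
    ge_of_tendsto (hw.inner_sub a p) (hUε.mono fun n hn => (not_le.1 hn).le)
  linarith [hap w hwC hTw hSw]

theorem norm_mix_averaged_sub_sq_le {β δ : ℝ} (hβ : β ∈ Set.Icc (0 : ℝ) 1)
    (hδ : δ ∈ Set.Icc (0 : ℝ) 1) {x t s p : H} (ht : ‖t - p‖ ≤ ‖x - p‖)
    (hs : ‖s - p‖ ≤ ‖x - p‖) :
    ‖β • ((1 - δ) • x + δ • t) + (1 - β) • ((1 - δ) • x + δ • s) - p‖ ^ 2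
      ≤ ‖x - p‖ ^ 2 - δ * (1 - δ) * (β * ‖x - t‖ ^ 2 + (1 - β) * ‖x - s‖ ^ 2) := by
  nlinarith [norm_smul_add_one_sub_smul_sub_sq_le hβ
      ((1 - δ) • x + δ • t) ((1 - δ) • x + δ • s) p,
    mul_le_mul_of_nonneg_left (norm_averaged_sub_sq_le hδ ht) hβ.1,
    mul_le_mul_of_nonneg_left (norm_averaged_sub_sq_le hδ hs) (sub_nonneg.2 hβ.2)]

theorem norm_mix_averaged_sub_le {β δ : ℝ} (hβ : β ∈ Set.Icc (0 : ℝ) 1) (hδ : 0 ≤ δ)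
    (x t s : H) :
    ‖β • ((1 - δ) • x + δ • t) + (1 - β) • ((1 - δ) • x + δ • s) - x‖
      ≤ δ * (‖x - t‖ + ‖x - s‖) := by
  rw [show β • ((1 - δ) • x + δ • t) + (1 - β) • ((1 - δ) • x + δ • s) - x
      = (β * δ) • (t - x) + ((1 - β) * δ) • (s - x) by module]
  refine (norm_add_le _ _).trans ?_
  rw [norm_smul, norm_smul, Real.norm_of_nonneg (mul_nonneg hβ.1 hδ),
    Real.norm_of_nonneg (mul_nonneg (sub_nonneg.2 hβ.2) hδ), norm_sub_rev t, norm_sub_rev s]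
  nlinarith [mul_nonneg hβ.1 (mul_nonneg hδ (norm_nonneg (x - s))),
    mul_nonneg (sub_nonneg.2 hβ.2) (mul_nonneg hδ (norm_nonneg (x - t)))]

theorem norm_halpern_sub_le {α : ℝ} (hα : α ∈ Set.Icc (0 : ℝ) 1) (u y x : H) :
    ‖α • u + (1 - α) • y - x‖ ≤ α * ‖u - x‖ + ‖y - x‖ := by
  rw [show α • u + (1 - α) • y - x = α • (u - x) + (1 - α) • (y - x) by module]
  refine (norm_add_le _ _).trans ?_
  rw [norm_smul, norm_smul, Real.norm_of_nonneg hα.1, Real.norm_of_nonneg (sub_nonneg.2 hα.2)]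
  nlinarith [mul_nonneg hα.1 (norm_nonneg (y - x))]

theorem norm_halpern_sub_sq_le {α : ℝ} (hα : α ∈ Set.Icc (0 : ℝ) 1) {u x y p : H}
    (hy : ‖y - p‖ ≤ ‖x - p‖) :
    ‖α • u + (1 - α) • y - p‖ ^ 2
      ≤ (1 - α) * ‖x - p‖ ^ 2 + α * (2 * ⟪u - p, α • u + (1 - α) • y - p⟫) := by
  have h1α : 0 ≤ 1 - α := sub_nonneg.2 hα.2
  have e : α • u + (1 - α) • y - p = α • (u - p) + (1 - α) • (y - p) := by module
  have h := norm_add_sq_le_norm_sq_add_two_inner (α • (u - p)) ((1 - α) • (y - p))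
  rw [← e, real_inner_smul_left, norm_smul, Real.norm_of_nonneg h1α] at h
  nlinarith [mul_le_mul_of_nonneg_left (pow_le_pow_left₀ (norm_nonneg _) hy 2) h1α,
    mul_nonneg (mul_nonneg h1α hα.1) (sq_nonneg ‖y - p‖)]

theorem exists_eventually_norm_sub_le_of_halpern {α : ℕ → ℝ}
    (hα : ∀ n, α n ∈ Set.Icc (0 : ℝ) 1) {u p : H} {x y : ℕ → H}
    (hx : ∀ᶠ n in atTop, x (n + 1) = α n • u + (1 - α n) • y n)
    (hy : ∀ᶠ n in atTop, ‖y n - p‖ ≤ ‖x n - p‖) :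
    ∃ M, ∀ᶠ n in atTop, ‖x n - p‖ ≤ M := by
  obtain ⟨N, hN⟩ := eventually_atTop.1 (hx.and hy)
  refine ⟨max ‖x N - p‖ ‖u - p‖, eventually_atTop.2 ⟨N, fun n hn => ?_⟩⟩
  induction n, hn using Nat.le_induction with
  | base => exact le_max_left _ _
  | succ n hn ih =>
    obtain ⟨hxn, hyn⟩ := hN n hn
    have hαn := hα n
    rw [hxn, show α n • u + (1 - α n) • y n - p = α n • (u - p) + (1 - α n) • (y n - p) by
      module]
    refine (norm_add_le _ _).trans ?_
    rw [norm_smul, norm_smul, Real.norm_of_nonneg hαn.1,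
      Real.norm_of_nonneg (sub_nonneg.2 hαn.2)]
    nlinarith [mul_le_mul_of_nonneg_left (le_max_right ‖x N - p‖ ‖u - p‖) hαn.1,
      mul_le_mul_of_nonneg_left (hyn.trans ih) (sub_nonneg.2 hαn.2)]

theorem tendsto_of_halpern {α r : ℕ → ℝ} (hα : ∀ n, α n ∈ Set.Ioo (0 : ℝ) 1)
    (hα0 : Tendsto α atTop (𝓝 0)) (hαsum : Tendsto (fun N => ∑ n ∈ range N, α n) atTop atTop)
    {u p : H} {x y : ℕ → H} {k K : ℝ} (hk : 0 < k)
    (hx : ∀ᶠ n in atTop, x (n + 1) = α n • u + (1 - α n) • y n)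
    (hy : ∀ᶠ n in atTop, ‖y n - p‖ ^ 2 ≤ ‖x n - p‖ ^ 2 - k * r n ^ 2)
    (hyx : ∀ᶠ n in atTop, ‖y n - x n‖ ≤ K * r n)
    (hcluster : ∀ (σ : ℕ → ℕ) (M : ℝ), Tendsto σ atTop atTop →
      (∀ᶠ n in atTop, ‖x (σ n) - p‖ ≤ M) → Tendsto (r ∘ σ) atTop (𝓝 0) →
      ∀ ε > 0, ∀ᶠ n in atTop, ⟪u - p, x (σ n) - p⟫ ≤ ε) :
    Tendsto x atTop (𝓝 p) := by
  have hα' : ∀ n, α n ∈ Set.Icc (0 : ℝ) 1 := fun n => Set.Ioo_subset_Icc_self (hα n)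
  have hyp : ∀ᶠ n in atTop, ‖y n - p‖ ≤ ‖x n - p‖ := hy.mono fun n hn =>
    pow_le_pow_iff_left₀ (norm_nonneg _) (norm_nonneg _) two_ne_zero |>.1
      (by nlinarith [sq_nonneg (r n)])
  obtain ⟨M, hM⟩ := exists_eventually_norm_sub_le_of_halpern hα' hx hyp
  rw [tendsto_iff_norm_sub_tendsto_zero]
  suffices h : Tendsto (fun n => ‖x n - p‖ ^ 2) atTop (𝓝 0) by
    simpa [Real.sqrt_sq (norm_nonneg _)] using h.sqrt
  refine tendsto_zero_of_le_one_sub_mul_add_mul_of_le_sub_add (fun n => sq_nonneg _)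
    (b := fun n => 2 * ⟪u - p, x (n + 1) - p⟫) (η := fun n => k / 2 * r n ^ 2)
    (ρ := fun n => α n * ‖u - p‖ ^ 2)
    (fun n => by positivity) hα hαsum (by simpa using hα0.mul_const (‖u - p‖ ^ 2)) ?_ ?_ ?_
  · filter_upwards [hx, hyp] with n hxn hyn
    rw [hxn]
    exact norm_halpern_sub_sq_le (hα' n) hyn
  · filter_upwards [hx, hy, hα0.eventually (gt_mem_nhds one_half_pos)] with n hxn hyn hαn
    rw [hxn]
    nlinarith [norm_smul_add_one_sub_smul_sub_sq_le (hα' n) u (y n) p,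
      mul_le_mul_of_nonneg_left hyn (sub_nonneg.2 (hα' n).2),
      mul_nonneg (mul_nonneg (by linarith : (0 : ℝ) ≤ 1 / 2 - α n) hk.le) (sq_nonneg (r n)),
      mul_nonneg (hα' n).1 (sq_nonneg ‖x n - p‖)]
  · intro σ hσ hη ε hε
    have hr : Tendsto (r ∘ σ) atTop (𝓝 0) :=
      tendsto_zero_of_tendsto_const_mul_sq (half_pos hk).ne' hη
    -- consecutive iterates merge along `σ`, so `hcluster` also bounds `b (σ n)`
    have hstep : Tendsto (fun n => ‖x (σ n + 1) - x (σ n)‖) atTop (𝓝 0) := by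
      refine squeeze_zero' (Eventually.of_forall fun n => norm_nonneg _)
        ?_ (by simpa using ((hα0.comp hσ).mul_const (‖u - p‖ + M)).add (hr.const_mul K))
      filter_upwards [hσ.eventually hx, hσ.eventually hyx, hσ.eventually hM]
        with n hxn hyxn hMn
      have hux : ‖u - x (σ n)‖ ≤ ‖u - p‖ + M :=
        (norm_sub_le_norm_sub_add_norm_sub _ _ _).trans (by rw [norm_sub_rev p]; linarith)
      rw [hxn]
      refine (norm_halpern_sub_le (hα' (σ n)) u (y (σ n)) (x (σ n))).trans ?_
      nlinarith [mul_le_mul_of_nonneg_left hux (hα' (σ n)).1]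
    have hinner : Tendsto (fun n => ⟪u - p, x (σ n + 1) - x (σ n)⟫) atTop (𝓝 0) := by
      simpa using (tendsto_const_nhds (x := u - p)).inner (𝕜 := ℝ)
        (tendsto_zero_iff_norm_tendsto_zero.2 hstep)
    filter_upwards [hcluster σ M hσ (hσ.eventually hM) hr (ε / 4) (by positivity),
      hinner.eventually (gt_mem_nhds (by positivity : 0 < ε / 4))] with n h₁ h₂
    rw [show x (σ n + 1) - p = (x (σ n) - p) + (x (σ n + 1) - x (σ n)) by abel,
      inner_add_right]
    linarith

theorem tendsto_averaged_halpern [CompleteSpace H] {C : Set H} (hCc : IsClosed C)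
    (hCv : Convex ℝ C) {T S : H → H} (hT : Set.MapsTo T C C) (hS : Set.MapsTo S C C)
    (hne : ∀ x ∈ C, ∀ y ∈ C, ‖T x - T y‖ ≤ ‖x - y‖)
    (hns : ∀ x ∈ C, ∀ y ∈ C, 2 * ‖S x - S y‖ ^ 2 ≤ ‖S x - y‖ ^ 2 + ‖x - S y‖ ^ 2)
    {δ : ℝ} (hδ : δ ∈ Set.Ioo (0 : ℝ) 1) {u : H} (hu : u ∈ C)
    {α β : ℕ → ℝ} (hα : ∀ n, α n ∈ Set.Ioo (0 : ℝ) 1) (hβ : ∀ n, β n ∈ Set.Icc (0 : ℝ) 1)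
    (hα0 : Tendsto α atTop (𝓝 0)) (hαsum : Tendsto (fun N => ∑ n ∈ range N, α n) atTop atTop)
    (hβ0 : 0 < liminf (fun n => β n * (1 - β n)) atTop)
    {x : ℕ → H} (hx1 : x 1 ∈ C)
    (hx : ∀ n ≥ 1, x (n + 1) = α n • u + (1 - α n) •
      (β n • ((1 - δ) • x n + δ • T (x n)) + (1 - β n) • ((1 - δ) • x n + δ • S (x n))))
    {p : H} (hpC : p ∈ C) (hTp : T p = p) (hSp : S p = p)
    (hpu : ∀ z ∈ C, T z = z → S z = z → ⟪u - p, z - p⟫ ≤ 0) :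
    Tendsto x atTop (𝓝 p) := by
  obtain ⟨hδ0, hδ1⟩ := hδ
  have hA : ∀ {R : H → H}, Set.MapsTo R C C → ∀ v ∈ C, (1 - δ) • v + δ • R v ∈ C :=
    fun hR v hv => hCv hv (hR hv) (by linarith) hδ0.le (by ring)
  have hxC : ∀ n ≥ 1, x n ∈ C := by
    intro n hn
    induction n, hn using Nat.le_induction with
    | base => exact hx1
    | succ n hn ih =>
      rw [hx n hn]
      exact hCv hu (hCv (hA hT _ ih) (hA hS _ ih) (hβ n).1 (sub_nonneg.2 (hβ n).2) (by ring))
        (hα n).1.le (sub_nonneg.2 (hα n).2.le) (by ring)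
  obtain ⟨c, hc, hβc⟩ : ∃ c > 0, ∀ᶠ n in atTop, c < β n * (1 - β n) :=
    ⟨_, half_pos hβ0, eventually_lt_of_lt_liminf (half_lt_self hβ0)
      (isBoundedUnder_of ⟨0, fun n => mul_nonneg (hβ n).1 (sub_nonneg.2 (hβ n).2)⟩)⟩
  refine tendsto_of_halpern hα hα0 hαsum (k := δ * (1 - δ) * c / 2) (K := δ)
    (r := fun n => ‖x n - T (x n)‖ + ‖x n - S (x n)‖)
    (by have := sub_pos.2 hδ1; positivity) ((eventually_ge_atTop 1).mono hx) ?_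
    (Eventually.of_forall fun n => norm_mix_averaged_sub_le (hβ n) hδ0.le _ _ _) ?_
  · filter_upwards [eventually_ge_atTop 1, hβc] with n hn hβn
    have hxn := hxC n hn
    refine (norm_mix_averaged_sub_sq_le (hβ n) ⟨hδ0.le, hδ1.le⟩
      (quasiNonexpansiveOn_of_nonexpansive hne _ hxn p hpC hTp)
      (quasiNonexpansiveOn_of_nonspreading hns _ hxn p hpC hSp)).trans ?_
    set a := ‖x n - T (x n)‖
    set b := ‖x n - S (x n)‖
    have hβn₁ : c ≤ β n := by nlinarith [(hβ n).1, (hβ n).2]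
    have hβn₂ : c ≤ 1 - β n := by nlinarith [(hβ n).1, (hβ n).2]
    have hab : c / 2 * (a + b) ^ 2 ≤ β n * a ^ 2 + (1 - β n) * b ^ 2 := by
      nlinarith [mul_le_mul_of_nonneg_right hβn₁ (sq_nonneg a),
        mul_le_mul_of_nonneg_right hβn₂ (sq_nonneg b), mul_nonneg hc.le (sq_nonneg (a - b))]
    nlinarith [mul_le_mul_of_nonneg_left hab (mul_nonneg hδ0.le (sub_pos.2 hδ1).le)]
  · intro σ M hσ hM hr
    exact eventually_inner_sub_le_of_tendsto_norm_sub_apply hCc hCv hne hns hpu (v := x ∘ σ)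
      ((hσ.eventually (eventually_ge_atTop 1)).and hM |>.mono fun n h => ⟨hxC _ h.1, h.2⟩)
      (squeeze_zero (fun _ => norm_nonneg _) (fun _ => le_add_of_nonneg_right (norm_nonneg _))
        hr)
      (squeeze_zero (fun _ => norm_nonneg _) (fun _ => le_add_of_nonneg_left (norm_nonneg _))
        hr)

end Hilbert

theorem stmt_17_general {H : Type*} [NormedAddCommGroup H] [InnerProductSpace ℝ H] [CompleteSpace H]
    (C : Set H) (hCc : IsClosed C) (hCv : Convex ℝ C)
    (T S : H → H) (hT : Set.MapsTo T C C) (hS : Set.MapsTo S C C)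
    (hne : ∀ x ∈ C, ∀ y ∈ C, ‖T x - T y‖ ≤ ‖x - y‖)
    (hns : ∀ x ∈ C, ∀ y ∈ C, 2 * ‖S x - S y‖ ^ 2 ≤ ‖S x - y‖ ^ 2 + ‖x - S y‖ ^ 2)
    (hFix : ∃ z ∈ C, T z = z ∧ S z = z)
    (δ : ℝ) (hδ : δ ∈ Set.Ioo (0 : ℝ) 1)
    (AT AS : H → H)
    (hAT : ∀ x, AT x = (1 - δ) • x + δ • T x)
    (hAS : ∀ x, AS x = (1 - δ) • x + δ • S x)
    (u : H) (hu : u ∈ C)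
    (α β : ℕ → ℝ) (hα : ∀ n, α n ∈ Set.Ioo (0 : ℝ) 1) (hβ : ∀ n, β n ∈ Set.Icc (0 : ℝ) 1)
    (hα0 : Filter.Tendsto α Filter.atTop (nhds 0))
    (hαdiv : Filter.Tendsto (fun N => ∑ n ∈ Finset.range N, α n) Filter.atTop Filter.atTop)
    (hβliminf : 0 < Filter.liminf (fun n => β n * (1 - β n)) Filter.atTop)
    (x : ℕ → H) (hx1 : x 1 ∈ C)
    (hrec : ∀ n ≥ 1, x (n + 1) =
      α n • u + (1 - α n) • (β n • AT (x n) + (1 - β n) • AS (x n))) :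
    ∃ p, p ∈ C ∧ T p = p ∧ S p = p ∧
      (∀ y ∈ C, T y = y → S y = y → ‖u - p‖ ≤ ‖u - y‖) ∧
      Filter.Tendsto x Filter.atTop (nhds p) := by
  have hTq := quasiNonexpansiveOn_of_nonexpansive hne
  have hSq := quasiNonexpansiveOn_of_nonspreading hns
  obtain ⟨z, hzC, hTz, hSz⟩ := hFix
  obtain ⟨p, ⟨⟨hpC, hTp⟩, -, hSp⟩, hpu, hpmin⟩ :=
    exists_nearest_point (K := (C ∩ fixedPoints T) ∩ (C ∩ fixedPoints S))
      ⟨z, ⟨hzC, hTz⟩, hzC, hSz⟩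
      ((hTq.isClosed_inter_fixedPoints hCc).inter (hSq.isClosed_inter_fixedPoints hCc))
      ((hTq.convex_inter_fixedPoints hCv).inter (hSq.convex_inter_fixedPoints hCv)) u
  refine ⟨p, hpC, hTp, hSp, fun y hy hTy hSy => hpmin y ⟨⟨hy, hTy⟩, hy, hSy⟩, ?_⟩
  refine tendsto_averaged_halpern hCc hCv hT hS hne hns hδ hu hα hβ hα0 hαdiv hβliminf hx1
    (fun n hn => ?_) hpC hTp hSp fun y hy hTy hSy => hpu y ⟨⟨hy, hTy⟩, hy, hSy⟩
  rw [hrec n hn, hAT, hAS]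

theorem stmt_17 {H : Type*} [NormedAddCommGroup H] [InnerProductSpace ℝ H] [CompleteSpace H]
    (C : Set H) (hC : C.Nonempty) (hCc : IsClosed C) (hCv : Convex ℝ C)
    (T S : H → H) (hT : Set.MapsTo T C C) (hS : Set.MapsTo S C C)
    (hne : ∀ x ∈ C, ∀ y ∈ C, ‖T x - T y‖ ≤ ‖x - y‖)
    (hns : ∀ x ∈ C, ∀ y ∈ C, 2 * ‖S x - S y‖ ^ 2 ≤ ‖S x - y‖ ^ 2 + ‖x - S y‖ ^ 2)
    (hFix : ∃ z ∈ C, T z = z ∧ S z = z)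
    (δ : ℝ) (hδ : δ ∈ Set.Ioo (0 : ℝ) 1)
    (AT AS : H → H)
    (hAT : ∀ x, AT x = (1 - δ) • x + δ • T x)
    (hAS : ∀ x, AS x = (1 - δ) • x + δ • S x)
    (u : H) (hu : u ∈ C)
    (α β : ℕ → ℝ) (hα : ∀ n, α n ∈ Set.Ioo (0 : ℝ) 1) (hβ : ∀ n, β n ∈ Set.Icc (0 : ℝ) 1)
    (hα0 : Filter.Tendsto α Filter.atTop (nhds 0))
    (hαdiv : Filter.Tendsto (fun N => ∑ n ∈ Finset.range N, α n) Filter.atTop Filter.atTop)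
    (hβliminf : 0 < Filter.liminf (fun n => β n * (1 - β n)) Filter.atTop)
    (x : ℕ → H) (hx1 : x 1 ∈ C)
    (hrec : ∀ n ≥ 1, x (n + 1) =
      α n • u + (1 - α n) • (β n • AT (x n) + (1 - β n) • AS (x n))) :
    ∃ p, p ∈ C ∧ T p = p ∧ S p = p ∧
      (∀ y ∈ C, T y = y → S y = y → ‖u - p‖ ≤ ‖u - y‖) ∧
      Filter.Tendsto x Filter.atTop (nhds p) :=
  stmt_17_general C hCc hCv T S hT hS hne hns hFix δ hδ AT AS hAT hAS u hu α β hα hβ hα0 hαdiv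
    hβliminf x hx1 hrec
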